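/- arXiv:1401.7023 — 3 statements merged into one kernel-verified Lean document; each statement's English description precedes it below -/
import Mathlib

section
/- Let Δ be an h-transverse polygon of height M having internal vertices, let N be the level of the uppermost internal vertex of Δ, and let (l,r) be a reordering of the left and right direction sequences (l_0, r_0) of Δ. Write β = β(d^t, r−l) = (β_0,…,β_M) and let β(Δ) = (β_0(Δ),…,β_M(Δ)) be the width sequence of Δ. If β_i(Δ) − β_i = n > 0 for some index i ≤ N, then δ(l,r) ≥ n(N+1−i). -/
open scoped Classical


/-- An h-transverse polygon (up to lattice translation), encoded by its height `M ≥ 1`, its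
top and bottom widths `d^t` and `d^b`, and its left and right direction sequences `l, r`
(0-indexed: `l i`, resp. `r i`, is the slope of the normal vector on the left, resp. right,
side at half-integer height between levels `i` and `i+1`, read from top to bottom, for
`0 ≤ i < M`).  The right directions are nonincreasing and the left ones nondecreasing, the
widths at interior heights are positive, and the total width change matches `d^b`. -/
structure HTransverse where
  M : ℕ
  M_pos : 0 < M
  dt : ℕ
  db : ℕ
  l : ℕ → ℤ
  r : ℕ → ℤ
  r_antitone : ∀ ⦃i j : ℕ⦄, i ≤ j → j < M → r j ≤ r i
  l_monotone : ∀ ⦃i j : ℕ⦄, i ≤ j → j < M → l i ≤ l j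
  width_pos : ∀ i : ℕ, 0 < i → i < M → 0 < (dt : ℤ) + ∑ j ∈ Finset.range i, (r j - l j)
  width_closes : (dt : ℤ) + ∑ j ∈ Finset.range M, (r j - l j) = (db : ℤ)

/-- The partial-sum sequence `β(d^t, r − l)`:
`β_i = d^t + ∑_{j<i} (r_j − l_j)` for `0 ≤ i ≤ M`. -/
def betaOf (dt : ℤ) (l r : ℕ → ℤ) (i : ℕ) : ℤ :=
  dt + ∑ j ∈ Finset.range i, (r j - l j)

namespace HTransverse

/-- The width sequence `β(Δ)` of the polygon: the widths at integer heights, top to bottom. -/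
def beta (P : HTransverse) (i : ℕ) : ℤ := betaOf (P.dt : ℤ) P.l P.r i

/-- There is a vertex of `Δ` on the right side at level `N`, `0 < N < M` (an internal vertex
of the right boundary): the right direction changes there. -/
def IsRightVertex (P : HTransverse) (N : ℕ) : Prop :=
  0 < N ∧ N < P.M ∧ P.r (N - 1) ≠ P.r N

/-- There is a vertex of `Δ` on the left side at level `N`, `0 < N < M`. -/
def IsLeftVertex (P : HTransverse) (N : ℕ) : Prop :=
  0 < N ∧ N < P.M ∧ P.l (N - 1) ≠ P.l N

/-- There is an internal vertex of `Δ` at level `N` (on either side). -/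
def IsInternalVertex (P : HTransverse) (N : ℕ) : Prop :=
  P.IsRightVertex N ∨ P.IsLeftVertex N

/-- Every extremal edge of `Δ` has (lattice) length at least `E`: every internal vertex is at
level at least `E` from the top and at least `E` from the bottom. -/
def ExtremalGE (P : HTransverse) (E : ℤ) : Prop :=
  ∀ N, P.IsInternalVertex N → E ≤ (N : ℤ) ∧ (N : ℤ) + E ≤ (P.M : ℤ)

/-- Every internal edge of `Δ` has (lattice) length at least `E`: internal vertices on the
same side are at least `E` levels apart. -/
def InternalGE (P : HTransverse) (E : ℤ) : Prop :=
  (∀ N N', P.IsRightVertex N → P.IsRightVertex N' → N < N' → (N : ℤ) + E ≤ (N' : ℤ)) ∧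
  (∀ N N', P.IsLeftVertex N → P.IsLeftVertex N' → N < N' → (N : ℤ) + E ≤ (N' : ℤ))

end HTransverse

/-- `s` is a rearrangement of the first `M` entries of `s0`. -/
def IsRearrangement (M : ℕ) (s0 s : ℕ → ℤ) : Prop :=
  ∃ σ : Equiv.Perm (Fin M), ∀ i : Fin M, s (i : ℕ) = s0 ((σ i : ℕ))

/-- The cogenus `δ(l, r)` of a pair of integer sequences of length `M` (0-indexed):
`δ(l,r) = ∑_{(i,j) ∈ Rev(r)} (r_j − r_i) + ∑_{(i,j) ∈ Rev(−l)} (l_i − l_j)`. -/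
def cogenusLR (M : ℕ) (l r : ℕ → ℤ) : ℤ :=
  (∑ p ∈ (Finset.range M ×ˢ Finset.range M).filter (fun p => p.1 < p.2 ∧ r p.1 < r p.2),
      (r p.2 - r p.1)) +
  (∑ p ∈ (Finset.range M ×ˢ Finset.range M).filter (fun p => p.1 < p.2 ∧ l p.2 < l p.1),
      (l p.1 - l p.2))

/-!
Above the uppermost internal vertex (level `N`) both sides of `Δ` are straight, so there
`r⁰` takes its maximal value `r⁰₀` and `l⁰` its minimal value `l⁰₀`, each at least `N` times.
The drop then splits as `n = ∑_{j<i} (r⁰₀ - r_j) + ∑_{j<i} (l_j - l⁰₀)`. An index `j < i`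
with `r_j < r⁰₀` forms a reversal of `r` with every later index carrying the value `r⁰₀`;
there are at least `N - j ≥ N + 1 - i` of those, each contributing `r⁰₀ - r_j`. The same
count for `-l` gives `δ(l, r) ≥ n (N + 1 - i)`.
-/

open Finset

def reversalSum (M : ℕ) (s : ℕ → ℤ) : ℤ :=
  ∑ p ∈ (range M ×ˢ range M).filter (fun p => p.1 < p.2 ∧ s p.1 < s p.2), (s p.2 - s p.1)

lemma cogenusLR_eq_reversalSum (M : ℕ) (l r : ℕ → ℤ) :
    cogenusLR M l r = reversalSum M r + reversalSum M (fun k => -l k) := by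
  unfold cogenusLR reversalSum
  congr 1
  refine sum_congr (filter_congr fun p _ => ?_) fun p _ => ?_
  · rw [neg_lt_neg_iff]
  · ring

lemma reversalSum_eq_sum_sum (M : ℕ) (s : ℕ → ℤ) :
    reversalSum M s =
      ∑ j ∈ range M, ∑ k ∈ (range M).filter (fun k => j < k ∧ s j < s k), (s k - s j) := by
  rw [reversalSum, sum_filter, sum_product]
  simp_rw [sum_filter]

section ReversalSum

variable {M : ℕ} {s : ℕ → ℤ} {c : ℤ}

lemma sub_mul_le_sum_filter_lt {j : ℕ} (hj : s j ≤ c) :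
    ((#((range M).filter (s · = c)) : ℤ) - j) * (c - s j) ≤
      ∑ k ∈ (range M).filter (fun k => j < k ∧ s j < s k), (s k - s j) := by
  have hpos : 0 ≤ ∑ k ∈ (range M).filter (fun k => j < k ∧ s j < s k), (s k - s j) :=
    sum_nonneg fun k hk => by linarith [(mem_filter.mp hk).2.2]
  rcases hj.eq_or_lt with hjc | hjc
  · simpa [hjc] using hpos
  set S := (range M).filter (s · = c)
  have hcard : (#S : ℤ) - j ≤ #(S.filter (j < ·)) := by
    have hbelow : S.filter (¬ j < ·) ⊆ range j := fun k hk => by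
      simp only [S, mem_filter, mem_range, not_lt] at hk ⊢
      exact hk.2.lt_of_ne fun h => hjc.ne (by subst h; exact hk.1.2)
    have := card_filter_add_card_filter_not (s := S) (j < ·)
    have := card_le_card hbelow
    simp only [card_range] at this
    omega
  have hsub : S.filter (j < ·) ⊆ (range M).filter (fun k => j < k ∧ s j < s k) := fun k hk => by
    simp only [S, mem_filter] at hk ⊢
    exact ⟨hk.1.1, hk.2, hk.1.2 ▸ hjc⟩
  calc ((#S : ℤ) - j) * (c - s j)
      ≤ #(S.filter (j < ·)) * (c - s j) := mul_le_mul_of_nonneg_right hcard (by linarith)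
    _ = ∑ k ∈ S.filter (j < ·), (s k - s j) := by
      rw [sum_congr rfl fun k hk => by rw [((mem_filter.mp (mem_filter.mp hk).1).2)],
        sum_const, nsmul_eq_mul]
    _ ≤ _ := sum_le_sum_of_subset_of_nonneg hsub fun k hk _ => by
      linarith [(mem_filter.mp hk).2.2]

lemma mul_sum_sub_le_reversalSum (hle : ∀ k < M, s k ≤ c) {N i : ℕ}
    (hN : N ≤ #((range M).filter (s · = c))) (hi : i ≤ N) :
    ((N : ℤ) + 1 - i) * ∑ j ∈ range i, (c - s j) ≤ reversalSum M s := by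
  have hiM : i ≤ M := hi.trans (hN.trans ((card_filter_le _ _).trans (card_range M).le))
  rw [mul_sum, reversalSum_eq_sum_sum]
  calc ∑ j ∈ range i, ((N : ℤ) + 1 - i) * (c - s j)
      ≤ ∑ j ∈ range i, ∑ k ∈ (range M).filter (fun k => j < k ∧ s j < s k), (s k - s j) := by
        refine sum_le_sum fun j hj => ?_
        have hjM : j < M := (mem_range.mp hj).trans_le hiM
        refine le_trans ?_ (sub_mul_le_sum_filter_lt (hle j hjM))
        have := mem_range.mp hj
        exact mul_le_mul_of_nonneg_right (by omega) (by linarith [hle j hjM])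
    _ ≤ _ := sum_le_sum_of_subset_of_nonneg (range_subset_range.mpr hiM) fun j _ _ =>
        sum_nonneg fun k hk => by linarith [(mem_filter.mp hk).2.2]

end ReversalSum

namespace IsRearrangement

variable {M : ℕ} {s₀ s : ℕ → ℤ}

lemma card_filter_eq (h : IsRearrangement M s₀ s) (p : ℤ → Prop) [DecidablePred p] :
    #((range M).filter (fun k => p (s k))) = #((range M).filter (fun k => p (s₀ k))) := by
  obtain ⟨σ, hσ⟩ := h
  rw [Finset.card_filter, Finset.card_filter,
    ← Fin.sum_univ_eq_sum_range (fun k => if p (s k) then 1 else 0),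
    ← Fin.sum_univ_eq_sum_range (fun k => if p (s₀ k) then 1 else 0)]
  simp_rw [hσ]
  exact Equiv.sum_comp σ (fun k => if p (s₀ k) then 1 else 0)

lemma le_of_forall_le (h : IsRearrangement M s₀ s) {c : ℤ} (hle : ∀ k < M, s₀ k ≤ c) :
    ∀ k < M, s k ≤ c := by
  obtain ⟨σ, hσ⟩ := h
  intro k hk
  rw [hσ ⟨k, hk⟩]
  exact hle _ (σ _).isLt

lemma neg (h : IsRearrangement M s₀ s) :
    IsRearrangement M (fun k => -s₀ k) (fun k => -s k) := by
  obtain ⟨σ, hσ⟩ := h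
  exact ⟨σ, fun k => by simp only [hσ k]⟩

lemma mul_sum_sub_le_reversalSum (h : IsRearrangement M s₀ s) {N i : ℕ} (hNM : N ≤ M)
    (hmax : ∀ k < M, s₀ k ≤ s₀ 0) (hconst : ∀ k < N, s₀ k = s₀ 0) (hi : i ≤ N) :
    ((N : ℤ) + 1 - i) * ∑ j ∈ range i, (s₀ 0 - s j) ≤ reversalSum M s := by
  refine _root_.mul_sum_sub_le_reversalSum (h.le_of_forall_le hmax) ?_ hi
  refine le_trans ?_ (h.card_filter_eq (· = s₀ 0)).ge
  calc N = #(range N) := (card_range N).symm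
    _ ≤ _ := card_le_card fun k hk => mem_filter.mpr
      ⟨mem_range.mpr ((mem_range.mp hk).trans_le hNM), hconst k (mem_range.mp hk)⟩

end IsRearrangement

lemma eq_apply_zero_of_lt {α : Type*} {f : ℕ → α} {N : ℕ} (hf : ∀ m, m + 1 < N → f m = f (m + 1)) :
    ∀ k < N, f k = f 0
  | 0, _ => rfl
  | k + 1, hk => (hf k hk).symm.trans (eq_apply_zero_of_lt hf k (by omega))

namespace HTransverse

variable (P : HTransverse) {N : ℕ}

lemma r_eq_r_zero (hmin : ∀ N', P.IsInternalVertex N' → N ≤ N') (hNM : N ≤ P.M) :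
    ∀ k < N, P.r k = P.r 0 :=
  eq_apply_zero_of_lt fun m hm => by
    by_contra hne
    have := hmin (m + 1) (Or.inl ⟨m.succ_pos, by omega, by simpa using hne⟩)
    omega

lemma l_eq_l_zero (hmin : ∀ N', P.IsInternalVertex N' → N ≤ N') (hNM : N ≤ P.M) :
    ∀ k < N, P.l k = P.l 0 :=
  eq_apply_zero_of_lt fun m hm => by
    by_contra hne
    have := hmin (m + 1) (Or.inr ⟨m.succ_pos, by omega, by simpa using hne⟩)
    omega

end HTransverse

theorem cogenus_lower_bound_of_beta_drop_general (P : HTransverse) (N : ℕ)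
    (hN : P.IsInternalVertex N) (hmin : ∀ N', P.IsInternalVertex N' → N ≤ N')
    (l r : ℕ → ℤ) (hl : IsRearrangement P.M P.l l) (hr : IsRearrangement P.M P.r r)
    (i : ℕ) (hi : i ≤ N) (n : ℤ)
    (hdrop : P.beta i - betaOf (P.dt : ℤ) l r i = n) :
    n * ((N : ℤ) + 1 - (i : ℤ)) ≤ cogenusLR P.M l r := by
  have hNM : N ≤ P.M := by rcases hN with h | h <;> exact h.2.1.le
  have hr₀ := P.r_eq_r_zero hmin hNM
  have hl₀ := P.l_eq_l_zero hmin hNM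
  have key_r := hr.mul_sum_sub_le_reversalSum hNM
    (fun k hk => P.r_antitone k.zero_le hk) hr₀ hi
  have key_l := hl.neg.mul_sum_sub_le_reversalSum hNM
    (fun k hk => neg_le_neg (P.l_monotone k.zero_le hk)) (fun k hk => by rw [hl₀ k hk]) hi
  have hsplit : n = ∑ j ∈ range i, (P.r 0 - r j) + ∑ j ∈ range i, (-P.l 0 - -l j) := by
    rw [← hdrop, HTransverse.beta, betaOf, betaOf, add_sub_add_left_eq_sub, ← sum_sub_distrib,
      ← sum_add_distrib]
    refine sum_congr rfl fun j hj => ?_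
    have hjN : j < N := (mem_range.mp hj).trans_le hi
    rw [hr₀ j hjN, hl₀ j hjN]
    ring
  calc n * ((N : ℤ) + 1 - i)
      = ((N : ℤ) + 1 - i) * ∑ j ∈ range i, (P.r 0 - r j) +
        ((N : ℤ) + 1 - i) * ∑ j ∈ range i, (-P.l 0 - -l j) := by rw [hsplit]; ring
    _ ≤ reversalSum P.M r + reversalSum P.M (fun k => -l k) := add_le_add key_r key_l
    _ = cogenusLR P.M l r := (cogenusLR_eq_reversalSum _ _ _).symm

/-- let `Δ` be an h-transverse polygon having internal vertices, `N` the level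
of the uppermost internal vertex, and `(l, r)` a reordering of `(l_0, r_0)`.  If
`β_i(Δ) − β_i = n > 0` for some `i ≤ N`, then `δ(l, r) ≥ n (N + 1 − i)`. -/
theorem cogenus_lower_bound_of_beta_drop (P : HTransverse) (N : ℕ)
    (hN : P.IsInternalVertex N) (hmin : ∀ N', P.IsInternalVertex N' → N ≤ N')
    (l r : ℕ → ℤ) (hl : IsRearrangement P.M P.l l) (hr : IsRearrangement P.M P.r r)
    (i : ℕ) (hi : i ≤ N) (n : ℤ) (hn : 0 < n)
    (hdrop : P.beta i - betaOf (P.dt : ℤ) l r i = n) :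
    n * ((N : ℤ) + 1 - (i : ℤ)) ≤ cogenusLR P.M l r :=
  cogenus_lower_bound_of_beta_drop_general P N hN hmin l r hl hr i hi n hdrop
end

section
/- Fix integers x > y with d = x − y, positive integers a and b, and let r_0 be the integer sequence consisting of a copies of x followed by b copies of y. Then for every integer m with 0 ≤ m ≤ min(a,b), the number of rearrangements r of r_0 satisfying ∑_{(i,j)∈Rev(r)} (r_j − r_i) = d·m equals p(m), the number of partitions of m. -/
open scoped Classical

/-- The quantity `∑_{(i,j) ∈ Rev(s)} (s_j − s_i)`, where
`Rev(s) = {(i,j) : i < j, s_i < s_j}` is the reversal set of the finite sequence `s`. -/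
def revSum {n : ℕ} (s : Fin n → ℤ) : ℤ :=
  ∑ p ∈ Finset.univ.filter (fun p : Fin n × Fin n => p.1 < p.2 ∧ s p.1 < s p.2),
    (s p.2 - s p.1)

/-!
Record a rearrangement by the set `t` of positions carrying `x`. Its reversals are the pairs
`i < j` with `i ∉ t`, `j ∈ t`, each contributing `d`, so the condition says that `t` has
exactly `m` reversals. If `f 0 < ⋯ < f (a - 1)` enumerates `t`, exactly `f k - k` positions
below `f k` lie outside `t`, so `t` has `∑ₖ (f k - k)` reversals, and `k ↦ f k - k` is a weakly
increasing sequence of `a` numbers in `[0, b]`. Those summing to `m` are the partitions of `m`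
into at most `a` parts of size at most `b`, padded with zeros; when `m ≤ min a b` that is every
partition of `m`.
-/

open Finset
open scoped Pointwise

section Rearrangement

variable {α β : Type*} [DecidableEq α]

theorem Finset.piecewise_const_injective {x y : β} (hxy : x ≠ y) :
    Function.Injective fun t : Finset α => t.piecewise (fun _ => x) (fun _ => y) := by
  intro s t h
  ext i
  have := congrFun h i
  by_cases hs : i ∈ s <;> by_cases ht : i ∈ t <;> simp_all [hxy.symm]

theorem setOf_exists_perm_piecewise (s : Finset α) (x y : β) :
    {r : α → β | ∃ σ : Equiv.Perm α, ∀ i, r i = s.piecewise (fun _ => x) (fun _ => y) (σ i)} =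
      (fun t : Finset α => t.piecewise (fun _ => x) (fun _ => y)) '' {t | #t = #s} := by
  ext r
  constructor
  · rintro ⟨σ, hσ⟩
    refine ⟨s.map σ.symm.toEmbedding, card_map _, funext fun i => ?_⟩
    simp [hσ, Finset.piecewise, Finset.mem_map_equiv]
  · rintro ⟨t, ht, rfl⟩
    obtain ⟨σ, hσ⟩ := (Set.powersetCard.isPretransitive (α := α) (n := #s)).exists_smul_eq
      ⟨t, ht⟩ ⟨s, rfl⟩
    have hmem : ∀ i, i ∈ t ↔ σ i ∈ s := fun i => by
      have hts : σ • t = s := by simpa [Set.powersetCard.coe_smul] using congrArg Subtype.val hσ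
      rw [← hts, ← Equiv.Perm.smul_def, Finset.smul_mem_smul_finset_iff]
    exact ⟨σ, fun i => by simp [Finset.piecewise, hmem]⟩

end Rearrangement

section Reversals

variable {n a : ℕ}

/-- `#Rev(s)` for `s = t.piecewise x y` with `y < x`. -/
def numRev (t : Finset (Fin n)) : ℕ :=
  #{p : Fin n × Fin n | p.1 < p.2 ∧ p.1 ∉ t ∧ p.2 ∈ t}

theorem revSum_piecewise {x y : ℤ} (hxy : y < x) (t : Finset (Fin n)) :
    revSum (t.piecewise (fun _ => x) (fun _ => y)) = (x - y) * numRev t := by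
  have hrev : ∀ p : Fin n × Fin n,
      t.piecewise (fun _ => x) (fun _ => y) p.1 < t.piecewise (fun _ => x) (fun _ => y) p.2 ↔
        p.1 ∉ t ∧ p.2 ∈ t := fun p => by
    by_cases h1 : p.1 ∈ t <;> by_cases h2 : p.2 ∈ t <;> simp [h1, h2, hxy, hxy.not_gt]
  rw [revSum, numRev]
  simp only [hrev]
  rw [sum_congr rfl fun p hp => ?_, sum_const, nsmul_eq_mul, mul_comm]
  obtain ⟨-, h1, h2⟩ := (mem_filter.1 hp).2
  simp [h1, h2]

theorem numRev_eq_sum (t : Finset (Fin n)) :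
    numRev t = ∑ j ∈ t, #{i ∈ Iio j | i ∉ t} := by
  rw [numRev, card_eq_sum_card_fiberwise (f := Prod.snd) (t := t)
    fun p hp => (mem_filter.1 hp).2.2.2]
  refine sum_congr rfl fun j _ =>
    card_nbij' Prod.fst (fun i => (i, j)) ?_ ?_ ?_ fun _ _ => rfl <;> intro <;> simp <;> grind

theorem OrderEmbedding.card_filter_Iio_notMem_add (f : Fin a ↪o Fin n) (k : Fin a) :
    #{i ∈ Iio (f k) | i ∉ univ.map f.toEmbedding} + k = f k := by
  have hmem : {i ∈ Iio (f k) | i ∈ univ.map f.toEmbedding} = (Iio k).map f.toEmbedding := by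
    ext i
    simp only [mem_filter, mem_Iio, mem_map, mem_univ, true_and]
    constructor
    · rintro ⟨hi, j, rfl⟩
      exact ⟨j, f.lt_iff_lt.1 hi, rfl⟩
    · rintro ⟨j, hj, rfl⟩
      exact ⟨f.lt_iff_lt.2 hj, j, rfl⟩
  rw [← Fin.card_Iio (f k), ← Fin.card_Iio k, ← card_map f.toEmbedding, ← hmem, add_comm]
  exact card_filter_add_card_filter_not _

theorem OrderEmbedding.val_le_val_apply (f : Fin a ↪o Fin n) (k : Fin a) : (k : ℕ) ≤ f k := by
  have := f.card_filter_Iio_notMem_add k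
  omega

theorem OrderEmbedding.monotone_val_apply_sub_val (f : Fin a ↪o Fin n) :
    Monotone fun k => (f k : ℕ) - k := by
  intro j k hjk
  have hj := f.card_filter_Iio_notMem_add j
  have hk := f.card_filter_Iio_notMem_add k
  have := card_le_card (filter_subset_filter (· ∉ univ.map f.toEmbedding)
    (Iio_subset_Iio (f.monotone hjk)))
  dsimp only
  omega

theorem OrderEmbedding.val_apply_sub_val_le (f : Fin a ↪o Fin n) (k : Fin a) :
    (f k : ℕ) - k ≤ n - a := by
  have hk := f.card_filter_Iio_notMem_add k
  have : #{i ∈ Iio (f k) | i ∉ univ.map f.toEmbedding} ≤ #(univ.map f.toEmbedding)ᶜ :=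
    card_le_card fun i hi => mem_compl.2 (mem_filter.1 hi).2
  rw [card_compl, card_map, card_univ, Fintype.card_fin, Fintype.card_fin] at this
  omega

theorem numRev_map_orderEmbedding (f : Fin a ↪o Fin n) :
    numRev (univ.map f.toEmbedding) = ∑ k, ((f k : ℕ) - k) := by
  rw [numRev_eq_sum, sum_map]
  refine sum_congr rfl fun k _ => ?_
  have := f.card_filter_Iio_notMem_add k
  simp only [RelEmbedding.coe_toEmbedding]
  omega

end Reversals

def Fin.orderEmbEquivBoundedOrderHom (a b : ℕ) :
    (Fin a ↪o Fin (a + b)) ≃ {c : Fin a →o ℕ // ∀ k, c k ≤ b} where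
  toFun f := ⟨⟨fun k => f k - k, f.monotone_val_apply_sub_val⟩,
    fun k => (f.val_apply_sub_val_le k).trans (by omega)⟩
  invFun c := OrderEmbedding.ofStrictMono (fun k => ⟨c.1 k + k, by have := c.2 k; omega⟩)
    fun j k hjk => by
      have := c.1.monotone hjk.le
      simp only [Fin.mk_lt_mk]
      omega
  left_inv f := by
    ext k
    have := f.val_le_val_apply k
    simp only [OrderEmbedding.coe_ofStrictMono, OrderHom.coe_mk]
    omega
  right_inv c := by
    ext k
    exact Nat.add_sub_cancel _ _

def OrderHom.finEquivSym {α : Type*} [LinearOrder α] (n : ℕ) :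
    (Fin n →o α) ≃ Sym α n where
  toFun c := ⟨List.ofFn c, by simp⟩
  invFun s := ⟨fun k => (s.1.sort)[(k : ℕ)]'(by simp), fun j k hjk =>
    (Multiset.pairwise_sort s.1 _).sortedLE.getElem_le_getElem_of_le hjk⟩
  left_inv c := by
    ext k
    simp [List.mergeSort_eq_self _ c.monotone.sortedLE_ofFn.pairwise]
  right_inv s := by
    apply Sym.coe_injective
    simp only [Sym.coe_mk]
    refine Eq.trans ?_ (Multiset.sort_eq (s : Multiset α) (· ≤ ·))
    exact congrArg _ (List.ext_getElem (by simp) fun i h₁ h₂ => by simp)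

def Nat.Partition.symSumEqEquiv {m a : ℕ} (hm : m ≤ a) :
    {s : Sym ℕ a // (s : Multiset ℕ).sum = m} ≃ m.Partition where
  toFun s := Nat.Partition.ofSums m s.1 s.2
  invFun p := ⟨⟨p.parts + Multiset.replicate (a - Multiset.card p.parts) 0, by
    have : Multiset.card p.parts ≤ m := by
      simpa [p.parts_sum] using Multiset.card_nsmul_le_sum (a := 1) fun x hx => p.parts_pos hx
    rw [Multiset.card_add, Multiset.card_replicate]
    omega⟩, by simp [p.parts_sum]⟩
  left_inv s := by
    apply Subtype.ext
    apply Sym.coe_injective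
    have hs := Multiset.filter_add_not (· ≠ 0) (s : Multiset ℕ)
    have hcard := congrArg Multiset.card hs
    simp only [ne_eq, Decidable.not_not, Multiset.card_add, Sym.card_coe] at hs hcard
    simp only [Sym.coe_mk, ofSums_parts, ne_eq]
    rw [Multiset.filter_eq' (s : Multiset ℕ) 0] at hs hcard
    rw [Multiset.card_replicate] at hcard
    conv_rhs => rw [← hs]
    congr 2
    omega
  right_inv p := by
    ext1
    rw [ofSums_parts, Sym.coe_mk, Multiset.filter_add,
      Multiset.filter_eq_self.2 fun z hz => (p.parts_pos hz).ne',
      Multiset.filter_eq_nil.2 fun z hz => not_not.2 (Multiset.eq_of_mem_replicate hz), add_zero]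

theorem ncard_setOf_card_eq_and {I : Type*} [LinearOrder I] (a : ℕ) (P : Finset I → Prop) :
    {t : Finset I | #t = a ∧ P t}.ncard =
      Nat.card {f : Fin a ↪o I // P (univ.map f.toEmbedding)} := by
  rw [← Nat.card_coe_set_eq]
  exact Nat.card_congr
    ((Equiv.subtypeSubtypeEquivSubtypeInter (· ∈ Set.powersetCard I a) P).symm.trans
      (Set.powersetCard.ofFinEmbEquiv.subtypeEquiv fun _ => Iff.rfl).symm)

theorem ncard_setOf_card_eq_numRev_eq {a b m : ℕ} (ha : m ≤ a) (hb : m ≤ b) :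
    {t : Finset (Fin (a + b)) | #t = a ∧ numRev t = m}.ncard = Fintype.card m.Partition := by
  calc _ = Nat.card {f : Fin a ↪o Fin (a + b) // ∑ k, ((f k : ℕ) - k) = m} := by
          simp only [ncard_setOf_card_eq_and, numRev_map_orderEmbedding]
    _ = Nat.card {c : Fin a →o ℕ // ∑ k, c k = m} :=
          Nat.card_congr
            (((Fin.orderEmbEquivBoundedOrderHom a b).subtypeEquiv fun _ => Iff.rfl).trans
              (Equiv.subtypeSubtypeEquivSubtype fun {c} (hc : ∑ k, c k = m) k =>
                (single_le_sum (fun _ _ => Nat.zero_le _) (mem_univ k)).trans (hc ▸ hb)))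
    _ = Nat.card {s : Sym ℕ a // (s : Multiset ℕ).sum = m} :=
          Nat.card_congr ((OrderHom.finEquivSym a).subtypeEquiv fun c => by
            rw [← List.sum_ofFn]; rfl)
    _ = Fintype.card m.Partition := by
          rw [Nat.card_congr (Nat.Partition.symSumEqEquiv ha), Nat.card_eq_fintype_card]

theorem count_rearrangements_eq_partitions_general (x y : ℤ) (hxy : y < x) (d : ℤ) (hd : d = x - y)
    (a b : ℕ) (m : ℕ) (hm : m ≤ min a b) :
    Set.ncard {r : Fin (a + b) → ℤ |
        (∃ σ : Equiv.Perm (Fin (a + b)),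
          ∀ i, r i = (fun i : Fin (a + b) => if (i : ℕ) < a then x else y) (σ i)) ∧
        revSum r = d * (m : ℤ)}
      = Fintype.card (Nat.Partition m) := by
  set s₀ : Finset (Fin (a + b)) := {i | (i : ℕ) < a}
  have hs₀ : #s₀ = a := by simp [s₀, Fin.card_filter_val_lt]
  have hbase (i : Fin (a + b)) :
      s₀.piecewise (fun _ => x) (fun _ => y) i = if (i : ℕ) < a then x else y := by
    simp [s₀, Finset.piecewise]
  have hrev (t : Finset (Fin (a + b))) :
      revSum (t.piecewise (fun _ => x) (fun _ => y)) = d * m ↔ numRev t = m := by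
    rw [revSum_piecewise hxy, hd, mul_right_inj' (sub_ne_zero.2 hxy.ne'), Nat.cast_inj]
  rw [← ncard_setOf_card_eq_numRev_eq (hm.trans (min_le_left a b)) (hm.trans (min_le_right a b)),
    ← Set.ncard_image_of_injective _ (Finset.piecewise_const_injective hxy.ne')]
  congr 1
  ext r
  have hrearr := Set.ext_iff.1 (setOf_exists_perm_piecewise s₀ x y) r
  simp only [hbase, hs₀, Set.mem_ofPred_eq, Set.mem_image] at hrearr ⊢
  rw [hrearr]
  constructor
  · rintro ⟨⟨t, ht, rfl⟩, hr⟩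
    exact ⟨t, ⟨ht, (hrev t).1 hr⟩, rfl⟩
  · rintro ⟨t, ⟨ht, hr⟩, rfl⟩
    exact ⟨⟨t, ht, rfl⟩, (hrev t).2 hr⟩

/-- fix integers `x > y` with `d = x − y`, positive integers `a`, `b`, and let
`r_0` consist of `a` copies of `x` followed by `b` copies of `y`.  Then for every
`0 ≤ m ≤ min(a, b)`, the number of rearrangements `r` of `r_0` (counted as distinct
sequences) satisfying `∑_{(i,j) ∈ Rev(r)} (r_j − r_i) = d·m` equals `p(m)`, the number of
partitions of `m`. -/
theorem count_rearrangements_eq_partitions (x y : ℤ) (hxy : y < x) (d : ℤ) (hd : d = x - y)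
    (a b : ℕ) (ha : 0 < a) (hb : 0 < b) (m : ℕ) (hm : m ≤ min a b) :
    Set.ncard {r : Fin (a + b) → ℤ |
        (∃ σ : Equiv.Perm (Fin (a + b)),
          ∀ i, r i = (fun i : Fin (a + b) => if (i : ℕ) < a then x else y) (σ i)) ∧
        revSum r = d * (m : ℤ)}
      = Fintype.card (Nat.Partition m) :=
  count_rearrangements_eq_partitions_general x y hxy d hd a b m hm
end

section
/- Let Γ be a template of length ℓ and Γ̄ its conjugate (the image of Γ under n ↦ ℓ − n). Suppose φ and φ̄ are affine functions, φ(x_0,…,x_{ℓ−1}) = η_0 + ∑_{j=0}^{ℓ−1} η_{j+1} x_j and φ̄(x_0,…,x_{ℓ−1}) = η̄_0 + ∑_{j=0}^{ℓ−1} η̄_{j+1} x_j with rational coefficients, such that for every M, every β = (β_0,…,β_M) ∈ ℤ_{≥0}^{M+1}, and every shift k ≥ 0 with k+ℓ ≤ M+1: if Γ_{(k)} is β-semiallowable then Φ_β(Γ_{(k)}) = φ(β_k,…,β_{k+ℓ−1}), and if Γ̄_{(k)} is β-semiallowable then Φ_β(Γ̄_{(k)}) = φ̄(β_k,…,β_{k+ℓ−1}).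 Then η̄_0 = η_0 and η̄_i = η_{ℓ+1−i} for i = 1,…,ℓ. Consequently, setting ζ^i = ∑_{j=1}^{ℓ} C(j−1,i) η_j and ζ̄^i = ∑_{j=1}^{ℓ} C(j−1,i) η̄_j (binomial coefficients C(j−1,i)), one has ζ̄^0 = ζ^0 and ζ^1 + ζ̄^1 = (ℓ−1)ζ^0. -/
open scoped Classical

/-- A long-edge graph: a finite multiset of weighted edges `(i, (j, ρ))` (an edge from `i`
to `j` of weight `ρ`) on the vertex set `ℕ`, with `i < j`, `ρ ≥ 1`, and no edge of
weight `1` connecting consecutive vertices. -/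
structure LongEdgeGraph where
  edges : Multiset (ℕ × ℕ × ℕ)
  valid : ∀ e ∈ edges, e.1 < e.2.1 ∧ 1 ≤ e.2.2 ∧ ¬(e.2.1 = e.1 + 1 ∧ e.2.2 = 1)

namespace LongEdgeGraph

/-- The cogenus `δ(G) = ∑_e (ℓ(e)·ρ(e) − 1)`, where `ℓ(e)` is the length of `e`. -/
def cogenus (G : LongEdgeGraph) : ℕ :=
  (G.edges.map fun e => (e.2.1 - e.1) * e.2.2 - 1).sum

/-- The multiplicity `μ(G) = ∏_e ρ(e)^2`. -/
def mult (G : LongEdgeGraph) : ℕ :=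
  (G.edges.map fun e => e.2.2 ^ 2).prod

/-- `λ_j(G)`: the sum of the weights of the edges from `i` to `k` with `i < j ≤ k`. -/
def lam (G : LongEdgeGraph) (j : ℕ) : ℕ :=
  ((G.edges.filter fun e => e.1 < j ∧ j ≤ e.2.1).map fun e => e.2.2).sum

/-- `λ̄_j(G) = λ_j(G)` minus the number of edges of `G` from `j−1` to `j`. -/
def lambar (G : LongEdgeGraph) (j : ℕ) : ℕ :=
  G.lam j - Multiset.card (G.edges.filter fun e => e.1 + 1 = j ∧ e.2.1 = j)

/-- The set of vertices of `G` with nonzero degree. -/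
def verts (G : LongEdgeGraph) : Set ℕ :=
  {v | ∃ e ∈ G.edges, e.1 = v ∨ e.2.1 = v}

/-- `minv(G)`: the smallest vertex of `G` with nonzero degree. -/
noncomputable def minv (G : LongEdgeGraph) : ℕ := sInf G.verts

/-- `maxv(G)`: the largest vertex of `G` with nonzero degree. -/
noncomputable def maxv (G : LongEdgeGraph) : ℕ := sSup G.verts

/-- The length `ℓ(G) = maxv(G) − minv(G)`. -/
noncomputable def lengthG (G : LongEdgeGraph) : ℕ := G.maxv - G.minv

/-- `ε_0(G)`: `1` if every edge incident to `minv(G)` has weight `1`, and `0` otherwise. -/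
noncomputable def eps0 (G : LongEdgeGraph) : ℕ :=
  if ∀ e ∈ G.edges, (e.1 = G.minv ∨ e.2.1 = G.minv) → e.2.2 = 1 then 1 else 0

/-- `ε_1(G)`: `1` if every edge incident to `maxv(G)` has weight `1`, and `0` otherwise. -/
noncomputable def eps1 (G : LongEdgeGraph) : ℕ :=
  if ∀ e ∈ G.edges, (e.1 = G.maxv ∨ e.2.1 = G.maxv) → e.2.2 = 1 then 1 else 0

/-- A template: `minv(Γ) = 0` and every vertex `i` with `1 ≤ i ≤ ℓ(Γ) − 1` is strictly
covered by some edge from `j` to `k` with `j < i < k`. -/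
def IsTemplate (G : LongEdgeGraph) : Prop :=
  G.minv = 0 ∧ ∀ i, 1 ≤ i → i + 1 ≤ G.lengthG → ∃ e ∈ G.edges, e.1 < i ∧ i < e.2.1

/-- The shift `G_{(k)}` of a long-edge graph: every edge is moved `k` units to the right. -/
def shiftG (G : LongEdgeGraph) (k : ℕ) : LongEdgeGraph where
  edges := G.edges.map fun e => (e.1 + k, e.2.1 + k, e.2.2)
  valid := by
    intro e he
    rw [Multiset.mem_map] at he
    obtain ⟨a, ha, rfl⟩ := he
    obtain ⟨h1, h2, h3⟩ := G.valid a ha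
    dsimp only
    refine ⟨by omega, h2, ?_⟩
    rintro ⟨hc1, hc2⟩
    exact h3 ⟨by omega, hc2⟩

end LongEdgeGraph

open LongEdgeGraph

/-- `G` is `β`-allowable: `maxv(G) ≤ M+1` and `β_{j−1} ≥ λ_j(G)` for each `j`. -/
def Allowable (M : ℕ) (β : ℕ → ℕ) (G : LongEdgeGraph) : Prop :=
  G.maxv ≤ M + 1 ∧ ∀ j, 1 ≤ j → j ≤ M + 1 → G.lam j ≤ β (j - 1)

/-- `G` is `β`-semiallowable: `maxv(G) ≤ M+1` and `β_{j−1} ≥ λ̄_j(G)` for each `j`. -/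
def Semiallowable (M : ℕ) (β : ℕ → ℕ) (G : LongEdgeGraph) : Prop :=
  G.maxv ≤ M + 1 ∧ ∀ j, 1 ≤ j → j ≤ M + 1 → G.lambar j ≤ β (j - 1)

/-- The edge multiset of `ext_β(G)`: the weighted edges of `G` together with
`β_{j−1} − λ_j(G)` unweighted edges (encoded with weight `0`) connecting `j−1` and `j`
for each `1 ≤ j ≤ M+1`. -/
def extEdges (M : ℕ) (β : ℕ → ℕ) (G : LongEdgeGraph) : Multiset (ℕ × ℕ × ℕ) :=
  G.edges + ∑ j ∈ Finset.range (M + 1), Multiset.replicate (β j - G.lam (j + 1)) (j, j + 1, 0)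

/-- `P_β(G)`: the number of `β`-extended orderings of `G` up to equivalence (and `0` if `G`
is not `β`-allowable).  An equivalence class of total orderings of the vertices and edges of
`ext_β(G)` (extending the natural order of the vertices, with every edge placed between its
endpoints, and with edges having the same endpoints and the same weight — or both unweighted —
indistinguishable) is encoded by the list of edges placed in each of the `M+1` gaps between
consecutive vertices `j` and `j+1`, `0 ≤ j ≤ M`. -/
noncomputable def Pbeta (M : ℕ) (β : ℕ → ℕ) (G : LongEdgeGraph) : ℕ :=
  if Allowable M β G then
    Nat.card {L : Fin (M + 1) → List (ℕ × ℕ × ℕ) //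
      (∑ j : Fin (M + 1), (↑(L j) : Multiset (ℕ × ℕ × ℕ))) = extEdges M β G ∧
      ∀ j : Fin (M + 1), ∀ e ∈ L j, e.1 ≤ (j : ℕ) ∧ (j : ℕ) + 1 ≤ e.2.1}
  else 0

/-- `(G_1, …, G_i)` is a partition of `G`: each `G_j` is nonempty and the disjoint union of
their weighted edge multisets is the weighted edge multiset of `G`. -/
def IsPartitionList (G : LongEdgeGraph) (Gs : List LongEdgeGraph) : Prop :=
  (∀ H ∈ Gs, H.edges ≠ 0) ∧ (Gs.map LongEdgeGraph.edges).sum = G.edges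

/-- `Φ_β(G) = ∑_{i ≥ 1} ((−1)^{i+1}/i) ∑_{(G_1,…,G_i)} ∏_j P_β(G_j)`, the sum over all
partitions of `G`. -/
noncomputable def Phi (M : ℕ) (β : ℕ → ℕ) (G : LongEdgeGraph) : ℚ :=
  ∑ᶠ Gs ∈ {Gs : List LongEdgeGraph | IsPartitionList G Gs},
    ((-1 : ℚ) ^ (Gs.length + 1) / (Gs.length : ℚ)) *
      (Gs.map fun H => (Pbeta M β H : ℚ)).prod

/-!
Reflecting the vertices by `n ↦ M + 1 - n` and the parameters by `β_j ↦ β_{M - j}` maps the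
`β`-extended orderings of a graph `G` bijectively onto those of its mirror image (the edges in
the gap `[j, j + 1]` go to the gap `[M - j, M + 1 - j]`), and partitions of `G` onto partitions of
the mirror image, so `Φ_β` is invariant. For a template `Γ` of length `ℓ`, the mirror image of
`Γ` inside `[0, ℓ + 1]` is `Γ̄_{(1)}`. Taking every `β_j` at least the total weight of `Γ` makes both
graphs semiallowable, so `φ̄` is `φ` with its variables reversed on all such `β`, and comparing
coefficients of these affine functions gives `η̄_0 = η_0` and `η̄_i = η_{ℓ+1-i}`. The identities for
`ζ` follow by reindexing `j ↦ ℓ + 1 - j`.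
-/

namespace LongEdgeGraph

theorem edges_injective : Function.Injective LongEdgeGraph.edges := by
  rintro ⟨_, _⟩ ⟨_, _⟩ rfl
  rfl

theorem shiftG_zero (G : LongEdgeGraph) : G.shiftG 0 = G :=
  edges_injective (by simp [shiftG])

def BoundedBy (G : LongEdgeGraph) (N : ℕ) : Prop := ∀ e ∈ G.edges, e.2.1 ≤ N

theorem BoundedBy.mono {G : LongEdgeGraph} {N N' : ℕ} (h : G.BoundedBy N) (hN : N ≤ N') :
    G.BoundedBy N' :=
  fun e he => (h e he).trans hN

theorem boundedBy_maxv (G : LongEdgeGraph) : G.BoundedBy G.maxv := by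
  intro e he
  refine le_csSup ⟨(G.edges.map fun e => e.2.1).sup, ?_⟩ ⟨e, he, Or.inr rfl⟩
  rintro v ⟨e', he', rfl | rfl⟩
  · exact (G.valid e' he').1.le.trans (Multiset.le_sup (Multiset.mem_map_of_mem _ he'))
  · exact Multiset.le_sup (Multiset.mem_map_of_mem _ he')

theorem maxv_le_of_boundedBy {G : LongEdgeGraph} {N : ℕ} (h : G.BoundedBy N) : G.maxv ≤ N := by
  rcases G.verts.eq_empty_or_nonempty with hempty | hne
  · simp [maxv, hempty]
  · refine csSup_le hne ?_
    rintro v ⟨e, he, rfl | rfl⟩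
    · exact (G.valid e he).1.le.trans (h e he)
    · exact h e he

def weight (G : LongEdgeGraph) : ℕ := (G.edges.map fun e => e.2.2).sum

theorem lam_le_weight (G : LongEdgeGraph) (j : ℕ) : G.lam j ≤ G.weight := by
  obtain ⟨rest, hrest⟩ :=
    Multiset.le_iff_exists_add.1 (Multiset.map_le_map (f := fun e => e.2.2)
      (Multiset.filter_le (fun e => e.1 < j ∧ j ≤ e.2.1) G.edges))
  rw [weight, hrest, Multiset.sum_add]
  exact Nat.le_add_right _ _

theorem semiallowable_of_weight_le {M : ℕ} {β : ℕ → ℕ} {G : LongEdgeGraph}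
    (hG : G.BoundedBy (M + 1)) (hβ : ∀ j, G.weight ≤ β j) : Semiallowable M β G :=
  ⟨maxv_le_of_boundedBy hG, fun j _ _ =>
    (Nat.sub_le _ _).trans ((G.lam_le_weight j).trans (hβ _))⟩

def reflectEdge (N : ℕ) (e : ℕ × ℕ × ℕ) : ℕ × ℕ × ℕ := (N - e.2.1, N - e.1, e.2.2)

theorem reflectEdge_reflectEdge {N : ℕ} {e : ℕ × ℕ × ℕ} (h₁ : e.1 ≤ N) (h₂ : e.2.1 ≤ N) :
    reflectEdge N (reflectEdge N e) = e := by
  obtain ⟨a, b, c⟩ := e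
  simp only [reflectEdge, Prod.mk.injEq, and_true] at *
  omega

/-- The mirror image of `G` under `n ↦ N - n`. Edges reaching beyond `N` are discarded, so that
the result is a long-edge graph for every `N`. -/
def reflect (G : LongEdgeGraph) (N : ℕ) : LongEdgeGraph where
  edges := (G.edges.filter fun e => e.2.1 ≤ N).map (reflectEdge N)
  valid := by
    simp only [Multiset.mem_map, Multiset.mem_filter]
    rintro _ ⟨e, ⟨he, heN⟩, rfl⟩
    obtain ⟨hlt, hρ, hshort⟩ := G.valid e he
    refine ⟨by simp only [reflectEdge]; omega, hρ, ?_⟩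
    rintro ⟨hconsec, hρ1⟩
    exact hshort ⟨by simp only [reflectEdge] at hconsec; omega, hρ1⟩

section Reflect

variable {G : LongEdgeGraph} {N : ℕ}

theorem reflect_edges (h : G.BoundedBy N) :
    (G.reflect N).edges = G.edges.map (reflectEdge N) := by
  simp only [reflect, Multiset.filter_eq_self.2 h]

theorem boundedBy_reflect (G : LongEdgeGraph) (N : ℕ) : (G.reflect N).BoundedBy N := by
  simp only [BoundedBy, reflect, Multiset.mem_map, Multiset.mem_filter]
  rintro _ ⟨e, -, rfl⟩
  exact Nat.sub_le _ _

theorem reflect_reflect (h : G.BoundedBy N) : (G.reflect N).reflect N = G := by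
  refine edges_injective ?_
  rw [reflect_edges (boundedBy_reflect G N), reflect_edges h, Multiset.map_map]
  conv_rhs => rw [← Multiset.map_id G.edges]
  exact Multiset.map_congr rfl fun e he =>
    reflectEdge_reflectEdge ((G.valid e he).1.le.trans (h e he)) (h e he)

theorem weight_reflect (h : G.BoundedBy N) : (G.reflect N).weight = G.weight := by
  simp [weight, reflect_edges h, Function.comp_def, reflectEdge]

theorem lam_reflect (h : G.BoundedBy N) (j : ℕ) : (G.reflect N).lam j = G.lam (N + 1 - j) := by
  rw [lam, lam, reflect_edges h, Multiset.filter_map, Multiset.map_map]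
  congr 2
  refine Multiset.filter_congr fun e he => ?_
  have := (G.valid e he).1
  have := h e he
  simp only [Function.comp_apply, reflectEdge]
  omega

end Reflect

theorem reflect_add_eq_shiftG {Γ Γbar : LongEdgeGraph} {ℓ : ℕ} (hΓ : Γ.BoundedBy ℓ)
    (hconj : Γbar.edges = Γ.edges.map fun e => (ℓ - e.2.1, ℓ - e.1, e.2.2)) (k : ℕ) :
    Γ.reflect (ℓ + k) = Γbar.shiftG k := by
  refine edges_injective ?_
  rw [reflect_edges (hΓ.mono (Nat.le_add_right ℓ k))]
  simp only [shiftG, hconj, Multiset.map_map]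
  refine Multiset.map_congr rfl fun e he => ?_
  have := (Γ.valid e he).1
  have := hΓ e he
  simp only [Function.comp_apply, reflectEdge, Prod.mk.injEq, and_true]
  omega

section Mirror

variable {M : ℕ} {β β' : ℕ → ℕ} {G : LongEdgeGraph}

theorem allowable_reflect (hG : G.BoundedBy (M + 1)) (hβ : ∀ j ≤ M, β' j = β (M - j)) :
    Allowable M β' (G.reflect (M + 1)) ↔ Allowable M β G := by
  simp only [Allowable, maxv_le_of_boundedBy hG, maxv_le_of_boundedBy (boundedBy_reflect G _),
    true_and, lam_reflect hG]
  constructor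
  · intro h j hj₁ hj₂
    have := h (M + 2 - j) (by omega) (by omega)
    rwa [hβ _ (by omega), show M + 1 + 1 - (M + 2 - j) = j by omega,
      show M - (M + 2 - j - 1) = j - 1 by omega] at this
  · intro h j hj₁ hj₂
    rw [hβ _ (by omega), show M - (j - 1) = M + 2 - j - 1 by omega,
      show M + 1 + 1 - j = M + 2 - j by omega]
    exact h (M + 2 - j) (by omega) (by omega)

theorem extEdges_reflect (hG : G.BoundedBy (M + 1)) (hβ : ∀ j ≤ M, β' j = β (M - j)) :
    extEdges M β' (G.reflect (M + 1)) = (extEdges M β G).map (reflectEdge (M + 1)) := by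
  rw [extEdges, extEdges, Multiset.map_add, reflect_edges hG, ← Multiset.coe_mapAddMonoidHom,
    map_sum]
  congr 1
  conv_rhs => rw [← Finset.sum_range_reflect]
  refine Finset.sum_congr rfl fun j hj => ?_
  have hj := Finset.mem_range.1 hj
  rw [Multiset.coe_mapAddMonoidHom, Multiset.map_replicate, lam_reflect hG, hβ j (by omega),
    show M + 1 - 1 - j = M - j by omega, show M + 1 + 1 - (j + 1) = M - j + 1 by omega]
  congr 1
  simp only [reflectEdge, Prod.mk.injEq, and_true]
  omega

theorem bounds_of_mem_extEdges (hG : G.BoundedBy (M + 1)) {e : ℕ × ℕ × ℕ}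
    (he : e ∈ extEdges M β G) : e.1 < e.2.1 ∧ e.2.1 ≤ M + 1 := by
  rcases Multiset.mem_add.1 he with he | he
  · exact ⟨(G.valid e he).1, hG e he⟩
  · obtain ⟨j, hj, he⟩ := Multiset.mem_sum.1 he
    rw [Multiset.eq_of_mem_replicate he]
    exact ⟨Nat.lt_succ_self j, Nat.succ_le_succ (Finset.mem_range_succ_iff.1 hj)⟩

def IsExtOrdering (M : ℕ) (β : ℕ → ℕ) (G : LongEdgeGraph)
    (L : Fin (M + 1) → List (ℕ × ℕ × ℕ)) : Prop :=
  (∑ j : Fin (M + 1), (↑(L j) : Multiset (ℕ × ℕ × ℕ))) = extEdges M β G ∧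
    ∀ j : Fin (M + 1), ∀ e ∈ L j, e.1 ≤ (j : ℕ) ∧ (j : ℕ) + 1 ≤ e.2.1

theorem Pbeta_eq_card (h : Allowable M β G) :
    Pbeta M β G = Nat.card {L | IsExtOrdering M β G L} := by
  rw [Pbeta, if_pos h]
  rfl

def mirrorGaps (M : ℕ) (L : Fin (M + 1) → List (ℕ × ℕ × ℕ)) :
    Fin (M + 1) → List (ℕ × ℕ × ℕ) :=
  fun j => (L j.rev).map (reflectEdge (M + 1))

theorem sum_mirrorGaps (L : Fin (M + 1) → List (ℕ × ℕ × ℕ)) :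
    ∑ j, (↑(mirrorGaps M L j) : Multiset (ℕ × ℕ × ℕ))
      = (∑ j, (↑(L j) : Multiset (ℕ × ℕ × ℕ))).map (reflectEdge (M + 1)) := by
  rw [← Multiset.coe_mapAddMonoidHom, map_sum]
  exact Fintype.sum_equiv Fin.revPerm _ _ fun j => by simp [mirrorGaps]

namespace IsExtOrdering

variable {L : Fin (M + 1) → List (ℕ × ℕ × ℕ)}

theorem bounds (hG : G.BoundedBy (M + 1)) (h : IsExtOrdering M β G L) {j : Fin (M + 1)}
    {e : ℕ × ℕ × ℕ} (he : e ∈ L j) : e.1 < e.2.1 ∧ e.2.1 ≤ M + 1 :=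
  bounds_of_mem_extEdges hG <| h.1 ▸ Multiset.mem_sum.2 ⟨j, Finset.mem_univ j, he⟩

theorem mirrorGaps (hG : G.BoundedBy (M + 1)) (hβ : ∀ j ≤ M, β' j = β (M - j))
    (h : IsExtOrdering M β G L) :
    IsExtOrdering M β' (G.reflect (M + 1)) (LongEdgeGraph.mirrorGaps M L) := by
  refine ⟨by rw [sum_mirrorGaps, h.1, extEdges_reflect hG hβ], fun j e he => ?_⟩
  simp only [LongEdgeGraph.mirrorGaps, List.mem_map] at he
  obtain ⟨e, he, rfl⟩ := he
  have := h.2 j.rev e he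
  have := h.bounds hG he
  rw [Fin.val_rev] at *
  have := j.2
  simp only [reflectEdge]
  omega

theorem mirrorGaps_mirrorGaps (hG : G.BoundedBy (M + 1)) (h : IsExtOrdering M β G L) :
    LongEdgeGraph.mirrorGaps M (LongEdgeGraph.mirrorGaps M L) = L := by
  funext j
  simp only [LongEdgeGraph.mirrorGaps, Fin.rev_rev, List.map_map]
  conv_rhs => rw [← List.map_id (L j)]
  refine List.map_congr_left fun e he => ?_
  have := h.bounds hG he
  exact reflectEdge_reflectEdge (by omega) this.2

end IsExtOrdering

theorem Pbeta_reflect (hG : G.BoundedBy (M + 1)) (hβ : ∀ j ≤ M, β' j = β (M - j)) :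
    Pbeta M β' (G.reflect (M + 1)) = Pbeta M β G := by
  have hG' := boundedBy_reflect G (M + 1)
  have hβ' : ∀ j ≤ M, β j = β' (M - j) := fun j hj => by
    rw [hβ _ (Nat.sub_le _ _), Nat.sub_sub_self hj]
  by_cases hA : Allowable M β G
  · rw [Pbeta_eq_card hA, Pbeta_eq_card ((allowable_reflect hG hβ).2 hA)]
    refine Nat.card_congr (Set.BijOn.equiv (mirrorGaps M)
      (Set.InvOn.bijOn (f' := mirrorGaps M) ?_ ?_ ?_)).symm
    · exact ⟨fun L hL => hL.mirrorGaps_mirrorGaps hG, fun L hL => hL.mirrorGaps_mirrorGaps hG'⟩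
    · exact fun L hL => hL.mirrorGaps hG hβ
    · intro L hL
      simpa only [Set.mem_ofPred_eq, reflect_reflect hG] using hL.mirrorGaps hG' hβ'
  · rw [Pbeta, Pbeta, if_neg hA, if_neg (mt (allowable_reflect hG hβ).1 hA)]

theorem IsPartitionList.boundedBy {Gs : List LongEdgeGraph} {N : ℕ} (hG : G.BoundedBy N)
    (hp : IsPartitionList G Gs) {H : LongEdgeGraph} (hH : H ∈ Gs) : H.BoundedBy N := by
  have hle : H.edges ≤ G.edges := hp.2 ▸ List.le_sum_of_mem (List.mem_map_of_mem hH)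
  exact fun e he => hG e (Multiset.mem_of_le hle he)

theorem IsPartitionList.map_reflect {Gs : List LongEdgeGraph} {N : ℕ} (hG : G.BoundedBy N)
    (hp : IsPartitionList G Gs) : IsPartitionList (G.reflect N) (Gs.map (reflect · N)) := by
  refine ⟨fun H hH => ?_, ?_⟩
  · obtain ⟨K, hK, rfl⟩ := List.mem_map.1 hH
    rw [reflect_edges (hp.boundedBy hG hK), Ne, Multiset.map_eq_zero]
    exact hp.1 K hK
  · have hmap : Gs.map (edges ∘ (reflect · N))
        = (Gs.map edges).map (Multiset.map (reflectEdge N)) := by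
      rw [List.map_map]
      exact List.map_congr_left fun K hK => reflect_edges (hp.boundedBy hG hK)
    rw [List.map_map, hmap, reflect_edges hG, ← hp.2, ← Multiset.coe_mapAddMonoidHom,
      map_list_sum]

theorem IsPartitionList.map_reflect_reflect {Gs : List LongEdgeGraph} {N : ℕ}
    (hG : G.BoundedBy N) (hp : IsPartitionList G Gs) :
    (Gs.map (reflect · N)).map (reflect · N) = Gs := by
  rw [List.map_map]
  conv_rhs => rw [← List.map_id Gs]
  exact List.map_congr_left fun K hK => reflect_reflect (hp.boundedBy hG hK)

theorem Phi_reflect (hG : G.BoundedBy (M + 1)) (hβ : ∀ j ≤ M, β' j = β (M - j)) :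
    Phi M β' (G.reflect (M + 1)) = Phi M β G := by
  have hG' := boundedBy_reflect G (M + 1)
  refine (finsum_mem_eq_of_bijOn (List.map (reflect · (M + 1))) (Set.InvOn.bijOn
    ⟨fun Gs hp => hp.map_reflect_reflect hG, fun Gs hp => hp.map_reflect_reflect hG'⟩
    (fun Gs hp => hp.map_reflect hG) (fun Gs hp => ?_)) fun Gs hp => ?_).symm
  · simpa only [Set.mem_ofPred_eq, reflect_reflect hG] using hp.map_reflect hG'
  · rw [List.length_map, List.map_map]
    congr 2
    exact List.map_congr_left fun K hK => by
      simp only [Function.comp_apply, Pbeta_reflect (hp.boundedBy hG hK) hβ]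

end Mirror

end LongEdgeGraph

theorem affine_coeffs_eq_of_forall_ge {R : Type*} [CommRing R] {n W : ℕ} {c c' : R}
    {f g : ℕ → R}
    (h : ∀ b : ℕ → ℕ, (∀ j, W ≤ b j) →
      c + ∑ j ∈ Finset.range n, f j * b j = c' + ∑ j ∈ Finset.range n, g j * b j) :
    c = c' ∧ ∀ j < n, f j = g j := by
  have hW := h (fun _ => W) fun _ => le_rfl
  have hcoeff : ∀ i < n, f i = g i := by
    intro i hi
    have hWi := h (fun j => W + if j = i then 1 else 0) fun _ => Nat.le_add_right _ _
    simp only [Nat.cast_add, Nat.cast_ite, Nat.cast_one, Nat.cast_zero, mul_add, mul_ite, mul_one,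
      mul_zero, Finset.sum_add_distrib, Finset.sum_ite_eq', Finset.mem_range, hi, if_true] at hWi
    linear_combination hWi - hW
  refine ⟨?_, hcoeff⟩
  rwa [Finset.sum_congr rfl fun j hj => by rw [hcoeff j (Finset.mem_range.1 hj)],
    add_left_inj] at hW

theorem Finset.sum_Icc_one_reflect {M : Type*} [AddCommMonoid M] (f : ℕ → M) (ℓ : ℕ) :
    ∑ j ∈ Finset.Icc 1 ℓ, f (ℓ + 1 - j) = ∑ j ∈ Finset.Icc 1 ℓ, f j :=
  Finset.sum_nbij' (fun j => ℓ + 1 - j) (fun j => ℓ + 1 - j)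
    (fun j hj => by simp only [Finset.mem_Icc] at *; omega)
    (fun j hj => by simp only [Finset.mem_Icc] at *; omega)
    (fun j hj => by simp only [Finset.mem_Icc] at *; omega)
    (fun j hj => by simp only [Finset.mem_Icc] at *; omega)
    fun _ _ => rfl

section Reversed

variable {ℓ : ℕ} {η ηbar : ℕ → ℚ}

theorem sum_Icc_choose_zero_mul_of_reversed
    (h : ∀ i, 1 ≤ i → i ≤ ℓ → ηbar i = η (ℓ + 1 - i)) :
    ∑ j ∈ Finset.Icc 1 ℓ, ((j - 1).choose 0 : ℚ) * ηbar j
      = ∑ j ∈ Finset.Icc 1 ℓ, ((j - 1).choose 0 : ℚ) * η j := by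
  simp only [Nat.choose_zero_right, Nat.cast_one, one_mul]
  rw [← Finset.sum_Icc_one_reflect η]
  exact Finset.sum_congr rfl fun i hi => h i (Finset.mem_Icc.1 hi).1 (Finset.mem_Icc.1 hi).2

theorem sum_Icc_choose_one_mul_add_of_reversed
    (h : ∀ i, 1 ≤ i → i ≤ ℓ → ηbar i = η (ℓ + 1 - i)) :
    ∑ j ∈ Finset.Icc 1 ℓ, ((j - 1).choose 1 : ℚ) * η j
        + ∑ j ∈ Finset.Icc 1 ℓ, ((j - 1).choose 1 : ℚ) * ηbar j
      = ((ℓ : ℚ) - 1) * ∑ j ∈ Finset.Icc 1 ℓ, ((j - 1).choose 0 : ℚ) * η j := by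
  have hbar : ∑ j ∈ Finset.Icc 1 ℓ, ((j - 1).choose 1 : ℚ) * ηbar j
      = ∑ j ∈ Finset.Icc 1 ℓ, ((ℓ - j : ℕ) : ℚ) * η j := by
    rw [← Finset.sum_Icc_one_reflect (fun j => ((ℓ - j : ℕ) : ℚ) * η j)]
    refine Finset.sum_congr rfl fun i hi => ?_
    obtain ⟨hi₁, hi₂⟩ := Finset.mem_Icc.1 hi
    rw [h i hi₁ hi₂, Nat.choose_one_right, show ℓ - (ℓ + 1 - i) = i - 1 by omega]
  rw [hbar, ← Finset.sum_add_distrib, Finset.mul_sum]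
  refine Finset.sum_congr rfl fun j hj => ?_
  obtain ⟨hj₁, hj₂⟩ := Finset.mem_Icc.1 hj
  rw [Nat.choose_one_right, Nat.choose_zero_right, ← add_mul, ← Nat.cast_add,
    show j - 1 + (ℓ - j) = ℓ - 1 by omega, Nat.cast_sub (hj₁.trans hj₂)]
  ring

end Reversed

theorem affine_eq_reversed_of_conj {Γ Γbar : LongEdgeGraph} {ℓ : ℕ} {η ηbar : ℕ → ℚ}
    (hΓ : Γ.BoundedBy ℓ)
    (hconj : Γbar.edges = Γ.edges.map (fun e => (ℓ - e.2.1, ℓ - e.1, e.2.2)))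
    (hphi : ∀ (M : ℕ) (β : ℕ → ℕ) (k : ℕ), k + ℓ ≤ M + 1 →
      Semiallowable M β (Γ.shiftG k) →
      Phi M β (Γ.shiftG k) = η 0 + ∑ j ∈ Finset.range ℓ, η (j + 1) * (β (k + j) : ℚ))
    (hphibar : ∀ (M : ℕ) (β : ℕ → ℕ) (k : ℕ), k + ℓ ≤ M + 1 →
      Semiallowable M β (Γbar.shiftG k) →
      Phi M β (Γbar.shiftG k) = ηbar 0 + ∑ j ∈ Finset.range ℓ, ηbar (j + 1) * (β (k + j) : ℚ))
    (b : ℕ → ℕ) (hb : ∀ j, Γ.weight ≤ b j) :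
    η 0 + ∑ j ∈ Finset.range ℓ, η (j + 1) * b j
      = ηbar 0 + ∑ j ∈ Finset.range ℓ, ηbar (ℓ - j) * b j := by
  have hΓ' : Γ.BoundedBy (ℓ + 1) := hΓ.mono ℓ.le_succ
  have hrefl : Γ.reflect (ℓ + 1) = Γbar.shiftG 1 := reflect_add_eq_shiftG hΓ hconj 1
  have hsemi : Semiallowable ℓ b (Γ.shiftG 0) := by
    rw [shiftG_zero]
    exact semiallowable_of_weight_le hΓ' hb
  have hsemibar : Semiallowable ℓ (fun j => b (ℓ - j)) (Γbar.shiftG 1) := by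
    rw [← hrefl]
    exact semiallowable_of_weight_le (boundedBy_reflect Γ _) fun _ =>
      (weight_reflect hΓ').le.trans (hb _)
  have hmirror := hphibar ℓ _ 1 (by omega) hsemibar
  rw [← hrefl, Phi_reflect hΓ' fun _ _ => rfl, ← shiftG_zero Γ, hphi ℓ b 0 (by omega) hsemi]
    at hmirror
  simp only [zero_add] at hmirror
  rw [hmirror, ← Finset.sum_range_reflect]
  congr 1
  refine Finset.sum_congr rfl fun j hj => ?_
  have hj := Finset.mem_range.1 hj
  rw [show ℓ - 1 - j + 1 = ℓ - j by omega, show ℓ - (1 + (ℓ - 1 - j)) = j by omega]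

/-- suppose `Γ` is a template of length `ℓ` with conjugate `Γ̄` (the image of
`Γ` under `n ↦ ℓ − n`), and suppose the affine functions with rational coefficients
`φ(x_0,…,x_{ℓ−1}) = η_0 + ∑_{j=0}^{ℓ−1} η_{j+1} x_j` and
`φ̄(x_0,…,x_{ℓ−1}) = η̄_0 + ∑_{j=0}^{ℓ−1} η̄_{j+1} x_j` compute `Φ_β` on all
`β`-semiallowable shifts `Γ_{(k)}`, resp. `Γ̄_{(k)}`, with `k + ℓ ≤ M + 1`.  Then
`η̄_0 = η_0` and `η̄_i = η_{ℓ+1−i}` for `i = 1, …, ℓ`; consequently, with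
`ζ^i = ∑_{j=1}^{ℓ} C(j−1, i) η_j` and `ζ̄^i = ∑_{j=1}^{ℓ} C(j−1, i) η̄_j`, one has
`ζ̄^0 = ζ^0` and `ζ^1 + ζ̄^1 = (ℓ−1) ζ^0`. -/
theorem conjugate_coefficients (Γ Γbar : LongEdgeGraph) (ℓ : ℕ)
    (hΓ : Γ.IsTemplate) (hlen : Γ.lengthG = ℓ)
    (hconj : Γbar.edges = Γ.edges.map (fun e => (ℓ - e.2.1, ℓ - e.1, e.2.2)))
    (η ηbar : ℕ → ℚ)
    (hphi : ∀ (M : ℕ) (β : ℕ → ℕ) (k : ℕ), k + ℓ ≤ M + 1 →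
      Semiallowable M β (Γ.shiftG k) →
      Phi M β (Γ.shiftG k) = η 0 + ∑ j ∈ Finset.range ℓ, η (j + 1) * (β (k + j) : ℚ))
    (hphibar : ∀ (M : ℕ) (β : ℕ → ℕ) (k : ℕ), k + ℓ ≤ M + 1 →
      Semiallowable M β (Γbar.shiftG k) →
      Phi M β (Γbar.shiftG k) = ηbar 0 + ∑ j ∈ Finset.range ℓ, ηbar (j + 1) * (β (k + j) : ℚ)) :
    ηbar 0 = η 0 ∧
    (∀ i, 1 ≤ i → i ≤ ℓ → ηbar i = η (ℓ + 1 - i)) ∧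
    (∑ j ∈ Finset.Icc 1 ℓ, ((j - 1).choose 0 : ℚ) * ηbar j)
      = (∑ j ∈ Finset.Icc 1 ℓ, ((j - 1).choose 0 : ℚ) * η j) ∧
    (∑ j ∈ Finset.Icc 1 ℓ, ((j - 1).choose 1 : ℚ) * η j)
        + (∑ j ∈ Finset.Icc 1 ℓ, ((j - 1).choose 1 : ℚ) * ηbar j)
      = ((ℓ : ℚ) - 1) * (∑ j ∈ Finset.Icc 1 ℓ, ((j - 1).choose 0 : ℚ) * η j) := by
  have hmaxv : Γ.maxv = ℓ := by rw [← hlen, lengthG, hΓ.1, Nat.sub_zero]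
  have hbdd : Γ.BoundedBy ℓ := hmaxv ▸ Γ.boundedBy_maxv
  obtain ⟨hconst, hcoeff⟩ := affine_coeffs_eq_of_forall_ge
    (affine_eq_reversed_of_conj hbdd hconj hphi hphibar)
  have hreversed : ∀ i, 1 ≤ i → i ≤ ℓ → ηbar i = η (ℓ + 1 - i) := fun i hi₁ hi₂ => by
    have := hcoeff (ℓ - i) (by omega)
    rwa [show ℓ - (ℓ - i) = i by omega, show ℓ - i + 1 = ℓ + 1 - i by omega, eq_comm] at this
  exact ⟨hconst.symm, hreversed, sum_Icc_choose_zero_mul_of_reversed hreversed,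
    sum_Icc_choose_one_mul_add_of_reversed hreversed⟩
end
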